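/- Theorem 1 (invariance of the optimal value function): for a group-invariant POMDP, suppose Q* : H × A → ℝ is bounded, satisfies the Bellman optimality equation Q* = B Q*, and is the unique such bounded solution. Define V*(h) := max_{a∈A} Q*(h,a). Then V* is group-invariant: V*(g•h) = V*(h) for all g ∈ G and h ∈ H. -/

import Mathlib

/-
Every ingredient of the History-MDP (filter weights, beliefs, observation probabilities,
rewards) is invariant under the diagonal action of `G`, so the Bellman operator commutes with
the translation `Q ↦ Q ∘ (g • ·)`. Translating `Q*` therefore gives another bounded fixed
point, which by uniqueness is `Q*` itself; maximizing over the permuted actions then gives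
`V*(g•h) = V*(h)`.
-/

open scoped NNReal

/-- A group-invariant POMDP over finite types of states `S`, actions `A`,
and observations `Ω`, with a group `G` acting on each. -/
structure GIPOMDP (G S A Ω : Type) [Group G] [MulAction G S] [MulAction G A] [MulAction G Ω]
    [Fintype S] [Fintype A] [Fintype Ω] where
  b0 : S → ℝ≥0
  T : S → A → S → ℝ≥0
  R : S → A → ℝ
  O0 : S → Ω → ℝ≥0
  O : A → S → Ω → ℝ≥0
  b0_sum : ∑ s, b0 s = 1
  b0_inv : ∀ (g : G) (s : S), b0 (g • s) = b0 s
  T_sum : ∀ (s : S) (a : A), ∑ s', T s a s' = 1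
  T_inv : ∀ (g : G) (s : S) (a : A) (s' : S), T (g • s) (g • a) (g • s') = T s a s'
  R_inv : ∀ (g : G) (s : S) (a : A), R (g • s) (g • a) = R s a
  O0_sum : ∀ s : S, ∑ o, O0 s o = 1
  O0_inv : ∀ (g : G) (s : S) (o : Ω), O0 (g • s) (g • o) = O0 s o
  O_sum : ∀ (a : A) (s' : S), ∑ o, O a s' o = 1
  O_inv : ∀ (g : G) (a : A) (s' : S) (o : Ω), O (g • a) (g • s') (g • o) = O a s' o

/-- A history: an initial observation followed by a list of action–observation pairs. -/
abbrev Hist (A Ω : Type) : Type := Ω × List (A × Ω)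

variable {G S A Ω : Type} [Group G] [MulAction G S] [MulAction G A] [MulAction G Ω]
  [Fintype S] [Fintype A] [Fintype Ω]

/-- Componentwise group action on histories. -/
def histAct (g : G) (h : Hist A Ω) : Hist A Ω :=
  (g • h.1, h.2.map fun p => (g • p.1, g • p.2))

/-- Appending an action–observation pair to a history: `h·(a,o)`. -/
def snocH (h : Hist A Ω) (a : A) (o : Ω) : Hist A Ω :=
  (h.1, h.2 ++ [(a, o)])

/-- Unnormalized filter weight, by recursion on the reversed action–observation list. -/
noncomputable def wRev (P : GIPOMDP G S A Ω) (o0 : Ω) : List (A × Ω) → S → ℝ≥0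
  | [] => fun s => P.b0 s * P.O0 s o0
  | (a, o) :: rest => fun s' => (∑ s, wRev P o0 rest s * P.T s a s') * P.O a s' o

/-- Unnormalized filter weight `w_h(s)`: `w_{(o0,[])}(s) = b0(s)·O0(s,o0)` and
`w_{h·(a,o)}(s') = (Σ_s w_h(s)·T(s,a,s'))·O(a,s',o)`. -/
noncomputable def w (P : GIPOMDP G S A Ω) (h : Hist A Ω) (s : S) : ℝ≥0 :=
  wRev P h.1 h.2.reverse s

/-- Belief `Pr(s|h)`, with the convention that it is `0` when the weights sum to `0`. -/
noncomputable def belief (P : GIPOMDP G S A Ω) (h : Hist A Ω) (s : S) : ℝ≥0 :=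
  if 0 < ∑ s', w P h s' then w P h s / ∑ s', w P h s' else 0

/-- Conditional observation probability `Pr(o|h,a) = Σ_s Pr(s|h)·Σ_{s'} T(s,a,s')·O(a,s',o)`. -/
noncomputable def probObs (P : GIPOMDP G S A Ω) (h : Hist A Ω) (a : A) (o : Ω) : ℝ≥0 :=
  ∑ s, belief P h s * ∑ s', P.T s a s' * P.O a s' o

open Classical in
/-- History-MDP transition function: `T̄(h,a,h') = Pr(o|h,a)` if `h' = h·(a,o)` for some `o`,
and `0` otherwise. -/
noncomputable def Tbar (P : GIPOMDP G S A Ω) (h : Hist A Ω) (a : A) (h' : Hist A Ω) : ℝ≥0 :=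
  ∑ o, if h' = snocH h a o then probObs P h a o else 0

/-- History-MDP reward function `R̄(h,a) = Σ_s Pr(s|h)·R(s,a)`. -/
noncomputable def Rbar (P : GIPOMDP G S A Ω) (h : Hist A Ω) (a : A) : ℝ :=
  ∑ s, (belief P h s : ℝ) * P.R s a

/-- Bellman optimality operator of the History-MDP:
`(BQ)(h,a) = R̄(h,a) + γ·Σ_o Pr(o|h,a)·max_{a'} Q(h·(a,o), a')`. -/
noncomputable def bellman [Nonempty A] (P : GIPOMDP G S A Ω) (γ : ℝ)
    (Q : Hist A Ω × A → ℝ) : Hist A Ω × A → ℝ :=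
  fun x => Rbar P x.1 x.2 + γ * ∑ o, (probObs P x.1 x.2 o : ℝ) *
    Finset.univ.sup' Finset.univ_nonempty (fun a' => Q (snocH x.1 x.2 o, a'))

def pairAct (g : G) (x : Hist A Ω × A) : Hist A Ω × A :=
  (histAct g x.1, g • x.2)

lemma sum_smul_comp {M : Type*} [AddCommMonoid M] (g : G) (f : S → M) :
    ∑ s, f (g • s) = ∑ s, f s :=
  Equiv.sum_comp (MulAction.toPerm g) f

lemma sup'_univ_smul_comp [Nonempty A] (g : G) (f : A → ℝ) :
    Finset.univ.sup' Finset.univ_nonempty (fun a => f (g • a)) =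
      Finset.univ.sup' Finset.univ_nonempty f := by
  rw [Finset.sup'_univ_eq_ciSup, Finset.sup'_univ_eq_ciSup]
  exact (MulAction.toPerm g).iSup_comp

lemma wRev_smul (P : GIPOMDP G S A Ω) (g : G) (o0 : Ω) (ℓ : List (A × Ω)) (s : S) :
    wRev P (g • o0) (ℓ.map fun p => (g • p.1, g • p.2)) (g • s) = wRev P o0 ℓ s := by
  induction ℓ generalizing s with
  | nil => simp only [List.map_nil, wRev, P.b0_inv, P.O0_inv]
  | cons p rest ih =>
    simp only [List.map_cons, wRev, P.O_inv]
    congr 1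
    rw [← sum_smul_comp g]
    simp only [ih, P.T_inv]

lemma w_histAct (P : GIPOMDP G S A Ω) (g : G) (h : Hist A Ω) (s : S) :
    w P (histAct g h) (g • s) = w P h s := by
  simpa only [w, histAct, List.map_reverse] using wRev_smul P g h.1 h.2.reverse s

lemma sum_w_histAct (P : GIPOMDP G S A Ω) (g : G) (h : Hist A Ω) :
    ∑ s, w P (histAct g h) s = ∑ s, w P h s := by
  simp only [← sum_smul_comp g (w P (histAct g h)), w_histAct]

lemma belief_histAct (P : GIPOMDP G S A Ω) (g : G) (h : Hist A Ω) (s : S) :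
    belief P (histAct g h) (g • s) = belief P h s := by
  simp only [belief, sum_w_histAct, w_histAct]

lemma probObs_histAct (P : GIPOMDP G S A Ω) (g : G) (h : Hist A Ω) (a : A) (o : Ω) :
    probObs P (histAct g h) (g • a) (g • o) = probObs P h a o := by
  simp only [probObs, ← sum_smul_comp g (fun s => belief P (histAct g h) s * _),
    ← sum_smul_comp g (fun s' => P.T _ _ s' * _), belief_histAct, P.T_inv, P.O_inv]

lemma Rbar_histAct (P : GIPOMDP G S A Ω) (g : G) (h : Hist A Ω) (a : A) :
    Rbar P (histAct g h) (g • a) = Rbar P h a := by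
  simp only [Rbar, ← sum_smul_comp g (fun s => (belief P (histAct g h) s : ℝ) * _),
    belief_histAct, P.R_inv]

lemma bellman_comp_pairAct [Nonempty A] (P : GIPOMDP G S A Ω) (γ : ℝ) (g : G)
    (Q : Hist A Ω × A → ℝ) :
    bellman P γ (Q ∘ pairAct g) = bellman P γ Q ∘ pairAct g := by
  have histAct_snocH (h : Hist A Ω) (a : A) (o : Ω) :
      histAct g (snocH h a o) = snocH (histAct g h) (g • a) (g • o) := by
    simp [histAct, snocH]
  funext x
  simp only [bellman, Function.comp_apply, pairAct, Rbar_histAct]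
  congr 2
  conv_rhs => rw [← sum_smul_comp g]
  refine Finset.sum_congr rfl fun o _ => ?_
  rw [probObs_histAct, ← histAct_snocH,
    sup'_univ_smul_comp g (fun a' => Q (histAct g (snocH x.1 x.2 o), a'))]

theorem optimal_V_invariant_general {G S A Ω : Type} [Group G] [MulAction G S] [MulAction G A] [MulAction G Ω]
    [Fintype S] [Fintype A] [Fintype Ω] [Nonempty A]
    (P : GIPOMDP G S A Ω)
    (γ : ℝ)
    (Qstar : Hist A Ω × A → ℝ)
    (hBdd : ∃ C : ℝ, ∀ x : Hist A Ω × A, |Qstar x| ≤ C)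
    (hFix : Qstar = bellman P γ Qstar)
    (hUniq : ∀ Q : Hist A Ω × A → ℝ,
      (∃ C : ℝ, ∀ x : Hist A Ω × A, |Q x| ≤ C) → Q = bellman P γ Q → Q = Qstar) :
    ∀ (g : G) (h : Hist A Ω),
      Finset.univ.sup' Finset.univ_nonempty (fun a : A => Qstar (histAct g h, a)) =
        Finset.univ.sup' Finset.univ_nonempty (fun a : A => Qstar (h, a)) := by
  intro g h
  obtain ⟨C, hC⟩ := hBdd
  have hTranslate : Qstar ∘ pairAct g = Qstar :=
    hUniq _ ⟨C, fun x => hC _⟩ (by rw [bellman_comp_pairAct, ← hFix])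
  conv_rhs => rw [← hTranslate]
  exact (sup'_univ_smul_comp g fun a => Qstar (histAct g h, a)).symm

/-- Theorem 1 (invariance of the optimal value function): if `Q*` is the unique bounded
solution of the Bellman optimality equation and `V*(h) := max_a Q*(h,a)`, then
`V*(g•h) = V*(h)`. -/
theorem optimal_V_invariant {G S A Ω : Type} [Group G] [MulAction G S] [MulAction G A] [MulAction G Ω]
    [Fintype S] [Fintype A] [Fintype Ω] [Nonempty S] [Nonempty A] [Nonempty Ω]
    (P : GIPOMDP G S A Ω)
    (γ : ℝ) (hγ0 : 0 ≤ γ) (hγ1 : γ < 1)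
    (Qstar : Hist A Ω × A → ℝ)
    (hBdd : ∃ C : ℝ, ∀ x : Hist A Ω × A, |Qstar x| ≤ C)
    (hFix : Qstar = bellman P γ Qstar)
    (hUniq : ∀ Q : Hist A Ω × A → ℝ,
      (∃ C : ℝ, ∀ x : Hist A Ω × A, |Q x| ≤ C) → Q = bellman P γ Q → Q = Qstar) :
    ∀ (g : G) (h : Hist A Ω),
      Finset.univ.sup' Finset.univ_nonempty (fun a : A => Qstar (histAct g h, a)) =
        Finset.univ.sup' Finset.univ_nonempty (fun a : A => Qstar (h, a)) :=
  optimal_V_invariant_general P γ Qstar hBdd hFix hUniq
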